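/- arXiv:1004.4383 — 3 statements merged into one kernel-verified Lean document; each statement's English description precedes it below -/
import Mathlib

section
/- Let S ⊆ ℤ² and let c ≥ 1 be a natural number. Then the full grid graph of the c-scaling S^c is connected if and only if the full grid graph of S is connected. (In particular, the c-scaling of a shape is again a shape.) -/
/-- The set of the four unit vectors in ℤ². -/
def U2 : Set (ℤ × ℤ) := {(0, 1), (1, 0), (0, -1), (-1, 0)}

/-- The full grid graph on a set `V ⊆ ℤ²`: vertices are the points of `V`, with an
edge between `a` and `b` whenever `a - b ∈ U2`. -/
def fgg (V : Set (ℤ × ℤ)) : SimpleGraph V :=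
  SimpleGraph.fromRel (fun a b => (a : ℤ × ℤ) - (b : ℤ × ℤ) ∈ U2)

/-- The `c`-scaling of `S ⊆ ℤ²`: all points whose coordinatewise floor-quotients by `c`
lie in `S`. -/
def scaling (S : Set (ℤ × ℤ)) (c : ℕ) : Set (ℤ × ℤ) :=
  {p : ℤ × ℤ | (Int.fdiv p.1 c, Int.fdiv p.2 c) ∈ S}

namespace ScalingAux

lemma U2_neg {u : ℤ × ℤ} (hu : u ∈ U2) : -u ∈ U2 := by
  simp only [U2, Set.mem_insert_iff, Set.mem_singleton_iff] at hu ⊢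
  rcases hu with h | h | h | h <;> subst h <;> simp [Prod.ext_iff]

lemma U2_ne_zero {u : ℤ × ℤ} (hu : u ∈ U2) : u ≠ 0 := by
  simp only [U2, Set.mem_insert_iff, Set.mem_singleton_iff] at hu
  rcases hu with h | h | h | h <;> subst h <;> simp [Prod.ext_iff]

lemma fgg_adj_of {V : Set (ℤ × ℤ)} {p q : ℤ × ℤ} (hp : p ∈ V) (hq : q ∈ V)
    (h : q - p ∈ U2) : (fgg V).Adj ⟨p, hp⟩ ⟨q, hq⟩ := by
  rw [fgg, SimpleGraph.fromRel_adj]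
  refine ⟨?_, Or.inr h⟩
  intro he
  apply U2_ne_zero h
  have hpq : p = q := congrArg Subtype.val he
  simp [hpq]

lemma reach_cast {V : Set (ℤ × ℤ)} {p q : ℤ × ℤ} (h : p = q) (hp : p ∈ V) (hq : q ∈ V) :
    (fgg V).Reachable ⟨p, hp⟩ ⟨q, hq⟩ := by
  cases h; exact SimpleGraph.Reachable.refl _

lemma reach_map {α β : Type*} {G : SimpleGraph α} {H : SimpleGraph β} (f : α → β)
    (hf : ∀ u v, G.Adj u v → H.Reachable (f u) (f v)) {u v : α}
    (h : G.Reachable u v) : H.Reachable (f u) (f v) := by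
  obtain ⟨w⟩ := h
  induction w with
  | nil => exact SimpleGraph.Reachable.refl _
  | cons ha _ ih => exact (hf _ _ ha).trans ih

lemma cpos {c : ℕ} (hc : 1 ≤ c) : (0 : ℤ) < (c : ℤ) := by exact_mod_cast hc

lemma fdiv_base {c : ℕ} (hc : 1 ≤ c) (a k : ℤ) (h0 : 0 ≤ k) (h1 : k < (c : ℤ)) :
    ((c : ℤ) * a + k).fdiv (c : ℤ) = a := by
  have hcz : (c : ℤ) ≠ 0 := (cpos hc).ne'
  rw [Int.fdiv_eq_ediv_of_nonneg _ (cpos hc).le, add_comm, Int.add_mul_ediv_left _ _ hcz,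
    Int.ediv_eq_zero_of_lt h0 h1, zero_add]

lemma fdiv_bounds {c : ℕ} (hc : 1 ≤ c) (x : ℤ) :
    (c : ℤ) * (x.fdiv (c : ℤ)) ≤ x ∧ x < (c : ℤ) * (x.fdiv (c : ℤ)) + c := by
  rw [Int.fdiv_eq_ediv_of_nonneg _ (cpos hc).le]
  have h := Int.mul_ediv_add_emod x (c : ℤ)
  have h1 := Int.emod_nonneg x (cpos hc).ne'
  have h2 := Int.emod_lt_of_pos x (cpos hc)
  constructor <;> linarith

lemma fdiv_eq_of {c : ℕ} (hc : 1 ≤ c) {x q : ℤ} (h1 : (c : ℤ) * q ≤ x) (h2 : x < (c : ℤ) * q + c) :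
    x.fdiv (c : ℤ) = q := by
  have h := fdiv_base hc q (x - (c : ℤ) * q) (by linarith) (by linarith)
  rw [show (c : ℤ) * q + (x - (c : ℤ) * q) = x by ring] at h
  exact h

lemma fdiv_succ {c : ℕ} (hc : 1 ≤ c) (x : ℤ) :
    (x + 1).fdiv (c : ℤ) = x.fdiv (c : ℤ) ∨
      (x + 1).fdiv (c : ℤ) = x.fdiv (c : ℤ) + 1 := by
  obtain ⟨h1, h2⟩ := fdiv_bounds hc x
  have e : (c : ℤ) * (x.fdiv (c : ℤ) + 1) = (c : ℤ) * (x.fdiv (c : ℤ)) + c := by ring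
  rcases lt_or_ge (x + 1) ((c : ℤ) * (x.fdiv (c : ℤ)) + c) with h | h
  · exact Or.inl (fdiv_eq_of hc (by linarith) h)
  · have hcpos := cpos (c := c) hc
    exact Or.inr (fdiv_eq_of hc (by linarith) (by linarith))

lemma mem_scaling {S : Set (ℤ × ℤ)} {c : ℕ} {p : ℤ × ℤ} :
    p ∈ scaling S c ↔ (p.1.fdiv (c : ℤ), p.2.fdiv (c : ℤ)) ∈ S := Iff.rfl

lemma can_mem {S : Set (ℤ × ℤ)} {c : ℕ} (hc : 1 ≤ c) {a : ℤ × ℤ} (ha : a ∈ S) :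
    ((c : ℤ) * a.1, (c : ℤ) * a.2) ∈ scaling S c := by
  rw [mem_scaling]
  have h1 : ((c : ℤ) * a.1).fdiv (c : ℤ) = a.1 := by
    simpa using fdiv_base hc a.1 0 le_rfl (cpos hc)
  have h2 : ((c : ℤ) * a.2).fdiv (c : ℤ) = a.2 := by
    simpa using fdiv_base hc a.2 0 le_rfl (cpos hc)
  simpa [h1, h2] using ha

/-- Reachability along a segment in direction `u`. -/
lemma reach_seg {V : Set (ℤ × ℤ)} {u : ℤ × ℤ} (hu : u ∈ U2) :
    ∀ (n : ℕ) (p : ℤ × ℤ) (h : ∀ k : ℕ, k ≤ n → p + (k : ℤ) • u ∈ V),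
      (fgg V).Reachable ⟨p, by simpa using h 0 (Nat.zero_le _)⟩
        ⟨p + (n : ℤ) • u, h n le_rfl⟩
  | 0, p, h => reach_cast (by simp) _ _
  | (n + 1), p, h => by
      have ih := reach_seg hu n p (fun k hk => h k (Nat.le_succ_of_le hk))
      have hdiff : (p + ((n + 1 : ℕ) : ℤ) • u) - (p + (n : ℤ) • u) = u := by
        push_cast
        rw [add_smul, one_smul]
        abel
      have hadj : (fgg V).Adj ⟨p + (n : ℤ) • u, h n (Nat.le_succ _)⟩
          ⟨p + ((n + 1 : ℕ) : ℤ) • u, h (n + 1) le_rfl⟩ :=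
        fgg_adj_of _ _ (by rw [hdiff]; exact hu)
      exact ih.trans hadj.reachable

lemma hu10 : ((1 : ℤ), (0 : ℤ)) ∈ U2 := by
  simp [U2]

lemma hu01 : ((0 : ℤ), (1 : ℤ)) ∈ U2 := by
  simp [U2]

/-- Every point of the scaling is reachable from the canonical point of its cell. -/
lemma reach_to_can {S : Set (ℤ × ℤ)} {c : ℕ} (hc : 1 ≤ c) {p : ℤ × ℤ}
    (hp : p ∈ scaling S c) :
    (fgg (scaling S c)).Reachable
      ⟨((c : ℤ) * (p.1.fdiv (c : ℤ)), (c : ℤ) * (p.2.fdiv (c : ℤ))),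
        can_mem hc (mem_scaling.mp hp)⟩ ⟨p, hp⟩ := by
  set a := p.1.fdiv (c : ℤ) with ha
  set b := p.2.fdiv (c : ℤ) with hb
  obtain ⟨ha1, ha2⟩ := fdiv_bounds hc p.1
  obtain ⟨hb1, hb2⟩ := fdiv_bounds hc p.2
  rw [← ha] at ha1 ha2
  rw [← hb] at hb1 hb2
  have haS : (a, b) ∈ S := mem_scaling.mp hp
  -- horizontal: from (c*a, c*b) to (p.1, c*b)
  have hmem1 : ∀ k : ℕ, k ≤ (p.1 - (c : ℤ) * a).toNat →
      ((c : ℤ) * a, (c : ℤ) * b) + (k : ℤ) • ((1 : ℤ), (0 : ℤ)) ∈ scaling S c := by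
    intro k hk
    have hk' : (k : ℤ) ≤ p.1 - (c : ℤ) * a := by
      have := Int.toNat_of_nonneg (by linarith : (0 : ℤ) ≤ p.1 - (c : ℤ) * a)
      omega
    have hpt : ((c : ℤ) * a, (c : ℤ) * b) + (k : ℤ) • ((1 : ℤ), (0 : ℤ))
        = ((c : ℤ) * a + k, (c : ℤ) * b) := by
      simp [Prod.ext_iff]
    rw [hpt, mem_scaling]
    have e1 : ((c : ℤ) * a + (k : ℤ)).fdiv (c : ℤ) = a :=
      fdiv_base hc a k (by positivity) (by linarith)
    have e2 : ((c : ℤ) * b).fdiv (c : ℤ) = b := by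
      simpa using fdiv_base hc b 0 le_rfl (cpos hc)
    simpa [e1, e2] using haS
  have R1 := reach_seg hu10 (p.1 - (c : ℤ) * a).toNat ((c : ℤ) * a, (c : ℤ) * b) hmem1
  -- vertical: from (p.1, c*b) to (p.1, p.2)
  have hmem2 : ∀ k : ℕ, k ≤ (p.2 - (c : ℤ) * b).toNat →
      (p.1, (c : ℤ) * b) + (k : ℤ) • ((0 : ℤ), (1 : ℤ)) ∈ scaling S c := by
    intro k hk
    have hk' : (k : ℤ) ≤ p.2 - (c : ℤ) * b := by
      have := Int.toNat_of_nonneg (by linarith : (0 : ℤ) ≤ p.2 - (c : ℤ) * b)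
      omega
    have hpt : (p.1, (c : ℤ) * b) + (k : ℤ) • ((0 : ℤ), (1 : ℤ))
        = (p.1, (c : ℤ) * b + k) := by
      simp [Prod.ext_iff]
    rw [hpt, mem_scaling]
    have e2 : ((c : ℤ) * b + (k : ℤ)).fdiv (c : ℤ) = b :=
      fdiv_base hc b k (by positivity) (by linarith)
    simpa [← ha, e2] using haS
  have R2 := reach_seg hu01 (p.2 - (c : ℤ) * b).toNat (p.1, (c : ℤ) * b) hmem2
  have he1 : ((c : ℤ) * a, (c : ℤ) * b) + ((((p.1 - (c : ℤ) * a).toNat : ℕ)) : ℤ)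
      • ((1 : ℤ), (0 : ℤ)) = (p.1, (c : ℤ) * b) := by
    have := Int.toNat_of_nonneg (by linarith : (0 : ℤ) ≤ p.1 - (c : ℤ) * a)
    simp [Prod.ext_iff, this]
  have he2 : (p.1, (c : ℤ) * b) + ((((p.2 - (c : ℤ) * b).toNat : ℕ)) : ℤ)
      • ((0 : ℤ), (1 : ℤ)) = (p.1, p.2) := by
    have := Int.toNat_of_nonneg (by linarith : (0 : ℤ) ≤ p.2 - (c : ℤ) * b)
    simp [Prod.ext_iff, this]
  have c1 := reach_cast (V := scaling S c) he1 (hmem1 _ le_rfl)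
    (by rw [← he1]; exact hmem1 _ le_rfl)
  have c2 := reach_cast (V := scaling S c) he2 (hmem2 _ le_rfl)
    (by rw [← he2]; exact hmem2 _ le_rfl)
  have hfin : (p.1, p.2) = p := rfl
  exact ((R1.trans c1).trans (R2.trans c2)).trans (reach_cast hfin _ _)

/-- Canonical points of adjacent cells (positive horizontal direction) are reachable. -/
lemma can_adj_h {S : Set (ℤ × ℤ)} {c : ℕ} (hc : 1 ≤ c) {a b : ℤ × ℤ}
    (ha : a ∈ S) (hb : b ∈ S) (h1 : b.1 = a.1 + 1) (h2 : b.2 = a.2) :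
    (fgg (scaling S c)).Reachable ⟨((c : ℤ) * a.1, (c : ℤ) * a.2), can_mem hc ha⟩
      ⟨((c : ℤ) * b.1, (c : ℤ) * b.2), can_mem hc hb⟩ := by
  have hmem : ∀ k : ℕ, k ≤ c →
      ((c : ℤ) * a.1, (c : ℤ) * a.2) + (k : ℤ) • ((1 : ℤ), (0 : ℤ)) ∈ scaling S c := by
    intro k hk
    have hpt : ((c : ℤ) * a.1, (c : ℤ) * a.2) + (k : ℤ) • ((1 : ℤ), (0 : ℤ))
        = ((c : ℤ) * a.1 + k, (c : ℤ) * a.2) := by simp [Prod.ext_iff]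
    rw [hpt, mem_scaling]
    have e2 : ((c : ℤ) * a.2).fdiv (c : ℤ) = a.2 := by
      simpa using fdiv_base hc a.2 0 le_rfl (cpos hc)
    rcases Nat.lt_or_ge k c with hlt | hge
    · have e1 : ((c : ℤ) * a.1 + (k : ℤ)).fdiv (c : ℤ) = a.1 :=
        fdiv_base hc a.1 k (by positivity) (by exact_mod_cast hlt)
      simpa [e1, e2] using ha
    · have heq : (k : ℤ) = (c : ℤ) := by exact_mod_cast le_antisymm hk hge
      rw [heq]
      have e1 : ((c : ℤ) * a.1 + (c : ℤ)).fdiv (c : ℤ) = a.1 + 1 := by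
        have := fdiv_base hc (a.1 + 1) 0 le_rfl (cpos hc)
        rw [show (c : ℤ) * (a.1 + 1) + 0 = (c : ℤ) * a.1 + c by ring] at this
        exact this
      have : (a.1 + 1, a.2) ∈ S := by rw [← h1, ← h2]; simpa [Prod.mk.eta] using hb
      simpa [e1, e2] using this
  have R := reach_seg hu10 c ((c : ℤ) * a.1, (c : ℤ) * a.2) hmem
  have he : ((c : ℤ) * a.1, (c : ℤ) * a.2) + ((c : ℕ) : ℤ) • ((1 : ℤ), (0 : ℤ))
      = ((c : ℤ) * b.1, (c : ℤ) * b.2) := by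
    simp [Prod.ext_iff, h1, h2]
    ring
  exact R.trans (reach_cast he _ (can_mem hc hb))

/-- Canonical points of adjacent cells (positive vertical direction) are reachable. -/
lemma can_adj_v {S : Set (ℤ × ℤ)} {c : ℕ} (hc : 1 ≤ c) {a b : ℤ × ℤ}
    (ha : a ∈ S) (hb : b ∈ S) (h1 : b.1 = a.1) (h2 : b.2 = a.2 + 1) :
    (fgg (scaling S c)).Reachable ⟨((c : ℤ) * a.1, (c : ℤ) * a.2), can_mem hc ha⟩
      ⟨((c : ℤ) * b.1, (c : ℤ) * b.2), can_mem hc hb⟩ := by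
  have hmem : ∀ k : ℕ, k ≤ c →
      ((c : ℤ) * a.1, (c : ℤ) * a.2) + (k : ℤ) • ((0 : ℤ), (1 : ℤ)) ∈ scaling S c := by
    intro k hk
    have hpt : ((c : ℤ) * a.1, (c : ℤ) * a.2) + (k : ℤ) • ((0 : ℤ), (1 : ℤ))
        = ((c : ℤ) * a.1, (c : ℤ) * a.2 + k) := by simp [Prod.ext_iff]
    rw [hpt, mem_scaling]
    have e1 : ((c : ℤ) * a.1).fdiv (c : ℤ) = a.1 := by
      simpa using fdiv_base hc a.1 0 le_rfl (cpos hc)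
    rcases Nat.lt_or_ge k c with hlt | hge
    · have e2 : ((c : ℤ) * a.2 + (k : ℤ)).fdiv (c : ℤ) = a.2 :=
        fdiv_base hc a.2 k (by positivity) (by exact_mod_cast hlt)
      simpa [e1, e2] using ha
    · have heq : (k : ℤ) = (c : ℤ) := by exact_mod_cast le_antisymm hk hge
      rw [heq]
      have e2 : ((c : ℤ) * a.2 + (c : ℤ)).fdiv (c : ℤ) = a.2 + 1 := by
        have := fdiv_base hc (a.2 + 1) 0 le_rfl (cpos hc)
        rw [show (c : ℤ) * (a.2 + 1) + 0 = (c : ℤ) * a.2 + c by ring] at this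
        exact this
      have : (a.1, a.2 + 1) ∈ S := by rw [← h1, ← h2]; simpa [Prod.mk.eta] using hb
      simpa [e1, e2] using this
  have R := reach_seg hu01 c ((c : ℤ) * a.1, (c : ℤ) * a.2) hmem
  have he : ((c : ℤ) * a.1, (c : ℤ) * a.2) + ((c : ℕ) : ℤ) • ((0 : ℤ), (1 : ℤ))
      = ((c : ℤ) * b.1, (c : ℤ) * b.2) := by
    simp [Prod.ext_iff, h1, h2]
    ring
  exact R.trans (reach_cast he _ (can_mem hc hb))

/-- Canonical points of adjacent cells are reachable, all four directions. -/
lemma can_adj {S : Set (ℤ × ℤ)} {c : ℕ} (hc : 1 ≤ c) {a b : ℤ × ℤ}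
    (ha : a ∈ S) (hb : b ∈ S) (h : b - a ∈ U2) :
    (fgg (scaling S c)).Reachable ⟨((c : ℤ) * a.1, (c : ℤ) * a.2), can_mem hc ha⟩
      ⟨((c : ℤ) * b.1, (c : ℤ) * b.2), can_mem hc hb⟩ := by
  simp only [U2, Set.mem_insert_iff, Set.mem_singleton_iff, Prod.ext_iff,
    Prod.fst_sub, Prod.snd_sub, Prod.fst_add, Prod.snd_add, sub_eq_iff_eq_add] at h
  rcases h with ⟨h1, h2⟩ | ⟨h1, h2⟩ | ⟨h1, h2⟩ | ⟨h1, h2⟩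
  · exact can_adj_v hc ha hb (by omega) (by omega)
  · exact can_adj_h hc ha hb (by omega) (by omega)
  · exact (can_adj_v hc hb ha (by omega) (by omega)).symm
  · exact (can_adj_h hc hb ha (by omega) (by omega)).symm

/-- Positive vertical step projection. -/
lemma proj_v {S : Set (ℤ × ℤ)} {c : ℕ} (hc : 1 ≤ c) {p q : ℤ × ℤ}
    (hp : p ∈ scaling S c) (hq : q ∈ scaling S c) (h1 : q.1 = p.1) (h2 : q.2 = p.2 + 1) :
    (fgg S).Reachable ⟨(p.1.fdiv (c : ℤ), p.2.fdiv (c : ℤ)), mem_scaling.mp hp⟩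
      ⟨(q.1.fdiv (c : ℤ), q.2.fdiv (c : ℤ)), mem_scaling.mp hq⟩ := by
  rcases fdiv_succ hc p.2 with h | h
  · exact reach_cast (by rw [h1, h2, h]) _ _
  · refine (fgg_adj_of _ _ ?_).reachable
    rw [h1, h2, h]
    simp [U2, Prod.ext_iff]

/-- Positive horizontal step projection. -/
lemma proj_h {S : Set (ℤ × ℤ)} {c : ℕ} (hc : 1 ≤ c) {p q : ℤ × ℤ}
    (hp : p ∈ scaling S c) (hq : q ∈ scaling S c) (h1 : q.1 = p.1 + 1) (h2 : q.2 = p.2) :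
    (fgg S).Reachable ⟨(p.1.fdiv (c : ℤ), p.2.fdiv (c : ℤ)), mem_scaling.mp hp⟩
      ⟨(q.1.fdiv (c : ℤ), q.2.fdiv (c : ℤ)), mem_scaling.mp hq⟩ := by
  rcases fdiv_succ hc p.1 with h | h
  · exact reach_cast (by rw [h1, h2, h]) _ _
  · refine (fgg_adj_of _ _ ?_).reachable
    rw [h1, h2, h]
    simp [U2, Prod.ext_iff]

/-- Adjacent points of the scaling project to reachable cells. -/
lemma proj_adj {S : Set (ℤ × ℤ)} {c : ℕ} (hc : 1 ≤ c) {p q : ℤ × ℤ}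
    (hp : p ∈ scaling S c) (hq : q ∈ scaling S c) (h : q - p ∈ U2) :
    (fgg S).Reachable ⟨(p.1.fdiv (c : ℤ), p.2.fdiv (c : ℤ)), mem_scaling.mp hp⟩
      ⟨(q.1.fdiv (c : ℤ), q.2.fdiv (c : ℤ)), mem_scaling.mp hq⟩ := by
  simp only [U2, Set.mem_insert_iff, Set.mem_singleton_iff, Prod.ext_iff,
    Prod.fst_sub, Prod.snd_sub, Prod.fst_add, Prod.snd_add, sub_eq_iff_eq_add] at h
  rcases h with ⟨h1, h2⟩ | ⟨h1, h2⟩ | ⟨h1, h2⟩ | ⟨h1, h2⟩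
  · exact proj_v hc hp hq (by omega) (by omega)
  · exact proj_h hc hp hq (by omega) (by omega)
  · exact (proj_v hc hq hp (by omega) (by omega)).symm
  · exact (proj_h hc hq hp (by omega) (by omega)).symm

end ScalingAux

open ScalingAux in
/-- The full grid graph of the `c`-scaling `S^c` is connected iff the full grid graph
of `S` is connected. -/
theorem scaling_connected_iff (S : Set (ℤ × ℤ)) (c : ℕ) (hc : 1 ≤ c) :
    (fgg (scaling S c)).Connected ↔ (fgg S).Connected := by
  constructor
  · intro h
    rw [SimpleGraph.connected_iff] at h ⊢
    obtain ⟨hpre, ⟨p0⟩⟩ := h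
    refine ⟨?_, ⟨⟨_, mem_scaling.mp p0.2⟩⟩⟩
    intro a b
    -- map canonical points through the scaling graph and project back
    have hA : ((c : ℤ) * (a : ℤ × ℤ).1, (c : ℤ) * (a : ℤ × ℤ).2) ∈ scaling S c :=
      can_mem hc a.2
    have hB : ((c : ℤ) * (b : ℤ × ℤ).1, (c : ℤ) * (b : ℤ × ℤ).2) ∈ scaling S c :=
      can_mem hc b.2
    have hr := hpre ⟨_, hA⟩ ⟨_, hB⟩
    have key := reach_map
      (f := fun (p : scaling S c) =>
        (⟨((p : ℤ × ℤ).1.fdiv (c : ℤ), (p : ℤ × ℤ).2.fdiv (c : ℤ)),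
          mem_scaling.mp p.2⟩ : S))
      (fun u v huv => by
        rw [fgg, SimpleGraph.fromRel_adj] at huv
        obtain ⟨-, huv⟩ := huv
        rcases huv with huv | huv
        · exact (proj_adj hc v.2 u.2 huv).symm
        · exact proj_adj hc u.2 v.2 huv) hr
    have ea : ((((c : ℤ) * (a : ℤ × ℤ).1).fdiv (c : ℤ),
        ((c : ℤ) * (a : ℤ × ℤ).2).fdiv (c : ℤ)) : ℤ × ℤ) = (a : ℤ × ℤ) := by
      have h1 : ((c : ℤ) * (a : ℤ × ℤ).1).fdiv (c : ℤ) = (a : ℤ × ℤ).1 := by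
        simpa using fdiv_base hc (a : ℤ × ℤ).1 0 le_rfl (cpos hc)
      have h2 : ((c : ℤ) * (a : ℤ × ℤ).2).fdiv (c : ℤ) = (a : ℤ × ℤ).2 := by
        simpa using fdiv_base hc (a : ℤ × ℤ).2 0 le_rfl (cpos hc)
      simp [h1, h2]
    have eb : ((((c : ℤ) * (b : ℤ × ℤ).1).fdiv (c : ℤ),
        ((c : ℤ) * (b : ℤ × ℤ).2).fdiv (c : ℤ)) : ℤ × ℤ) = (b : ℤ × ℤ) := by
      have h1 : ((c : ℤ) * (b : ℤ × ℤ).1).fdiv (c : ℤ) = (b : ℤ × ℤ).1 := by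
        simpa using fdiv_base hc (b : ℤ × ℤ).1 0 le_rfl (cpos hc)
      have h2 : ((c : ℤ) * (b : ℤ × ℤ).2).fdiv (c : ℤ) = (b : ℤ × ℤ).2 := by
        simpa using fdiv_base hc (b : ℤ × ℤ).2 0 le_rfl (cpos hc)
      simp [h1, h2]
    have ca := reach_cast (V := S) ea (by rw [ea]; exact a.2) a.2
    have cb := reach_cast (V := S) eb (by rw [eb]; exact b.2) b.2
    have := (ca.symm.trans key).trans cb
    simpa using this
  · intro h
    rw [SimpleGraph.connected_iff] at h ⊢
    obtain ⟨hpre, ⟨s0⟩⟩ := h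
    refine ⟨?_, ⟨⟨_, can_mem hc s0.2⟩⟩⟩
    intro p q
    -- reach canonical points of cells, then connect cells through S
    have R1 := reach_to_can hc p.2
    have R2 := reach_to_can hc q.2
    have hr := hpre ⟨_, mem_scaling.mp p.2⟩ ⟨_, mem_scaling.mp q.2⟩
    have key := reach_map
      (f := fun (s : S) =>
        (⟨((c : ℤ) * (s : ℤ × ℤ).1, (c : ℤ) * (s : ℤ × ℤ).2), can_mem hc s.2⟩ :
          scaling S c))
      (fun u v huv => by
        rw [fgg, SimpleGraph.fromRel_adj] at huv
        obtain ⟨-, huv⟩ := huv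
        rcases huv with huv | huv
        · exact (can_adj hc v.2 u.2 huv).symm
        · exact can_adj hc u.2 v.2 huv) hr
    have hp' : (⟨p, p.2⟩ : scaling S c) = p := rfl
    have := ((R1.symm.trans key).trans R2)
    simpa using this
end

section
/- Let X ⊆ ℤ² be a finite shape and let {R_i}_{i=0}^{k−1} be a rectangle decomposition of X. Then the graph on {0,…,k−1} having an edge between i and j whenever i ≠ j and R_i and R_j are adjacent is connected. -/
/-- The rectangle of width `m` and height `n` positioned at `(a, b)`. -/
def rect (a b : ℤ) (m n : ℕ) : Set (ℤ × ℤ) :=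
  {p : ℤ × ℤ | a ≤ p.1 ∧ p.1 < a + m ∧ b ≤ p.2 ∧ p.2 < b + n}

/-- The interface between `R` and `R'` in direction `u`. -/
def interface (u : ℤ × ℤ) (R R' : Set (ℤ × ℤ)) : Set (ℤ × ℤ) :=
  {p : ℤ × ℤ | p ∈ R' ∧ p - u ∈ R}

/-- Two sets are adjacent if they have a nonempty interface in some direction `u ∈ U2`. -/
def Adjacent (R R' : Set (ℤ × ℤ)) : Prop :=
  ∃ u ∈ U2, (interface u R R').Nonempty

/-- For a rectangle decomposition of a finite shape `X`, the adjacency graph of the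
rectangles is connected. -/
theorem rectangle_decomposition_graph_connected {k : ℕ} (X : Set (ℤ × ℤ))
    (hXfin : X.Finite) (hXconn : (fgg X).Connected)
    (R : Fin k → Set (ℤ × ℤ))
    (hrect : ∀ i, ∃ a b : ℤ, ∃ m n : ℕ, 1 ≤ m ∧ 1 ≤ n ∧ R i = rect a b m n)
    (hdisj : ∀ i j, i ≠ j → R i ∩ R j = ∅)
    (hunion : (⋃ i, R i) = X) :
    (SimpleGraph.fromRel (fun i j : Fin k => Adjacent (R i) (R j))).Connected := by
  classical
  set G := SimpleGraph.fromRel (fun i j : Fin k => Adjacent (R i) (R j)) with hG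
  have hmem : ∀ p ∈ X, ∃ i, p ∈ R i := by
    intro p hp
    rw [← hunion] at hp
    exact Set.mem_iUnion.mp hp
  have huniq : ∀ {p : ℤ × ℤ} {i j : Fin k}, p ∈ R i → p ∈ R j → i = j := by
    intro p i j hi hj
    by_contra h
    have := hdisj i j h
    have : p ∈ R i ∩ R j := ⟨hi, hj⟩
    rw [hdisj i j h] at this
    exact this
  have hstep : ∀ (a b : ℤ × ℤ) (i j : Fin k), a ∈ R i → b ∈ R j →
      ((a - b ∈ U2) ∨ (b - a ∈ U2)) → G.Reachable i j := by
    intro a b i j ha hb hu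
    by_cases hij : i = j
    · exact hij ▸ SimpleGraph.Reachable.refl i
    · refine SimpleGraph.Adj.reachable ?_
      rw [hG, SimpleGraph.fromRel_adj]
      refine ⟨hij, ?_⟩
      rcases hu with hu | hu
      · exact Or.inr ⟨a - b, hu, a, ha, by rw [sub_sub_cancel]; exact hb⟩
      · exact Or.inl ⟨b - a, hu, b, hb, by rw [sub_sub_cancel]; exact ha⟩
  -- index function
  have hfex : ∀ x : X, ∃ i, (x : ℤ × ℤ) ∈ R i := fun x => hmem x x.2
  set f : X → Fin k := fun x => (hfex x).choose with hf
  have hfspec : ∀ x : X, (x : ℤ × ℤ) ∈ R (f x) := fun x => (hfex x).choose_spec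
  have key : ∀ (x y : X), (fgg X).Reachable x y → G.Reachable (f x) (f y) := by
    intro x y hxy
    obtain ⟨w⟩ := hxy
    induction w with
    | nil => exact SimpleGraph.Reachable.refl _
    | @cons u v _ h p ih =>
      refine SimpleGraph.Reachable.trans ?_ ih
      rw [fgg, SimpleGraph.fromRel_adj] at h
      exact hstep _ _ _ _ (hfspec u) (hfspec v) h.2
  have hR : ∀ i, (R i).Nonempty := by
    intro i
    obtain ⟨a, b, m, n, hm, hn, hr⟩ := hrect i
    refine ⟨(a, b), ?_⟩
    rw [hr]
    simp only [rect, Set.mem_setOf_eq]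
    refine ⟨le_refl _, ?_, le_refl _, ?_⟩ <;> omega
  have hne : Nonempty (Fin k) := by
    obtain ⟨x⟩ := hXconn.nonempty
    exact ⟨f x⟩
  refine SimpleGraph.Connected.mk ?_
  intro i j
  obtain ⟨p, hp⟩ := hR i
  obtain ⟨q, hq⟩ := hR j
  have hpX : p ∈ X := by rw [← hunion]; exact Set.mem_iUnion.mpr ⟨i, hp⟩
  have hqX : q ∈ X := by rw [← hunion]; exact Set.mem_iUnion.mpr ⟨j, hq⟩
  have := key ⟨p, hpX⟩ ⟨q, hqX⟩ (hXconn.preconnected _ _)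
  rwa [huniq (hfspec ⟨p, hpX⟩) hp, huniq (hfspec ⟨q, hqX⟩) hq] at this
end

section
/- Let R and R' be disjoint rectangles in ℤ² and let c ≥ 1 be a natural number. Then for every u ∈ U2, the interface between the c-scaled rectangles satisfies |I^u(R^c, R'^c)| = c · |I^u(R, R')|. In particular, scaling a rectangle decomposition by c multiplies the length of every interface by c. -/
/-! ### Auxiliary lemmas -/

lemma scaling_rect (a b : ℤ) (m n : ℕ) (c : ℕ) (hc : 1 ≤ c) :
    scaling (rect a b m n) c = rect (c * a) (c * b) (c * m) (c * n) := by
  have hc' : (0:ℤ) < (c:ℤ) := by exact_mod_cast hc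
  ext p
  simp only [scaling, rect, Set.mem_setOf_eq]
  rw [Int.fdiv_eq_ediv_of_nonneg _ (le_of_lt hc'), Int.fdiv_eq_ediv_of_nonneg _ (le_of_lt hc')]
  push_cast
  rw [Int.le_ediv_iff_mul_le hc', Int.le_ediv_iff_mul_le hc',
    Int.ediv_lt_iff_lt_mul hc', Int.ediv_lt_iff_lt_mul hc']
  constructor <;> intro h <;> refine ⟨?_, ?_, ?_, ?_⟩ <;>
    nlinarith [h.1, h.2.1, h.2.2.1, h.2.2.2]

lemma card_box (A B C D : ℤ) :
    ({p : ℤ × ℤ | A ≤ p.1 ∧ p.1 < B ∧ C ≤ p.2 ∧ p.2 < D}).ncard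
      = (B - A).toNat * (D - C).toNat := by
  have h : {p : ℤ × ℤ | A ≤ p.1 ∧ p.1 < B ∧ C ≤ p.2 ∧ p.2 < D}
      = ↑(Finset.Ico A B ×ˢ Finset.Ico C D) := by
    ext p
    simp [Finset.mem_Ico, and_assoc]
  rw [h, Set.ncard_coe_finset, Finset.card_product, Int.card_Ico, Int.card_Ico]

lemma interface_rect_ncard (u : ℤ × ℤ) (a b a' b' : ℤ) (m n m' n' : ℕ) :
    (interface u (rect a b m n) (rect a' b' m' n')).ncard
      = (min (a + m + u.1) (a' + m') - max (a + u.1) a').toNat *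
        (min (b + n + u.2) (b' + n') - max (b + u.2) b').toNat := by
  have h : interface u (rect a b m n) (rect a' b' m' n')
      = {p : ℤ × ℤ | max (a + u.1) a' ≤ p.1 ∧ p.1 < min (a + m + u.1) (a' + m') ∧
          max (b + u.2) b' ≤ p.2 ∧ p.2 < min (b + n + u.2) (b' + n')} := by
    ext p
    simp only [interface, rect, Set.mem_setOf_eq, Prod.fst_sub, Prod.snd_sub]
    omega
  rw [h, card_box]

lemma toNat_cmul (c : ℕ) (z : ℤ) : ((c:ℤ) * z).toNat = c * z.toNat := by
  rcases le_or_gt 0 z with h | h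
  · lift z to ℕ using h
    rw [← Nat.cast_mul, Int.toNat_natCast, Int.toNat_natCast]
  · rw [Int.toNat_of_nonpos (mul_nonpos_of_nonneg_of_nonpos (by positivity) h.le),
      Int.toNat_of_nonpos h.le, mul_zero]

lemma min_cmul (c : ℕ) (x y : ℤ) : min ((c:ℤ) * x) ((c:ℤ) * y) = (c:ℤ) * min x y := by
  rcases le_total x y with h | h
  · rw [min_eq_left h, min_eq_left (mul_le_mul_of_nonneg_left h (by positivity))]
  · rw [min_eq_right h, min_eq_right (mul_le_mul_of_nonneg_left h (by positivity))]

lemma max_cmul (c : ℕ) (x y : ℤ) : max ((c:ℤ) * x) ((c:ℤ) * y) = (c:ℤ) * max x y := by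
  rcases le_total x y with h | h
  · rw [max_eq_right h, max_eq_right (mul_le_mul_of_nonneg_left h (by positivity))]
  · rw [max_eq_left h, max_eq_left (mul_le_mul_of_nonneg_left h (by positivity))]

/-- The main arithmetic lemma: for two disjoint "interval boxes"
`[A,B) × [C,D)` and `[A',B') × [C',D')`, the interface count scales by `c`. -/
lemma key (A B A' B' C D C' D' : ℤ) (c : ℕ) (hc : 1 ≤ c)
    (hCD : C + 1 ≤ D) (hCD' : C' + 1 ≤ D')
    (hd : min B B' ≤ max A A' ∨ min D D' ≤ max C C') :
    (min ((c:ℤ) * B) ((c:ℤ) * B') - max ((c:ℤ) * A) ((c:ℤ) * A')).toNat *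
      (min ((c:ℤ) * D + 1) ((c:ℤ) * D') - max ((c:ℤ) * C + 1) ((c:ℤ) * C')).toNat
    = c * ((min B B' - max A A').toNat * (min (D + 1) D' - max (C + 1) C').toNat) := by
  have hc' : (1:ℤ) ≤ (c:ℤ) := by exact_mod_cast hc
  have hX : (min ((c:ℤ) * B) ((c:ℤ) * B') - max ((c:ℤ) * A) ((c:ℤ) * A')).toNat
      = c * (min B B' - max A A').toNat := by
    rw [min_cmul, max_cmul, ← mul_sub, toNat_cmul]
  rcases hd with hx | hy
  · have h0 : (min B B' - max A A').toNat = 0 := by omega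
    rw [hX, h0, mul_zero, zero_mul, zero_mul, mul_zero]
  · have hsub : D ≤ C' ∨ D' ≤ C := by omega
    rcases hsub with h | h
    · rcases eq_or_lt_of_le h with he | hlt
      · have e1 : min ((c:ℤ) * D + 1) ((c:ℤ) * D') = (c:ℤ) * D + 1 := by
          have : (c:ℤ) * (D + 1) ≤ (c:ℤ) * D' :=
            mul_le_mul_of_nonneg_left (by omega) (by positivity)
          apply min_eq_left; nlinarith
        have e2 : max ((c:ℤ) * C + 1) ((c:ℤ) * C') = (c:ℤ) * C' := by
          have : (c:ℤ) * (C + 1) ≤ (c:ℤ) * C' :=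
            mul_le_mul_of_nonneg_left (by omega) (by positivity)
          apply max_eq_right; nlinarith
        have hY : (min ((c:ℤ) * D + 1) ((c:ℤ) * D')
            - max ((c:ℤ) * C + 1) ((c:ℤ) * C')).toNat = 1 := by
          rw [e1, e2, ← he]; simp
        have hY' : (min (D + 1) D' - max (C + 1) C').toNat = 1 := by omega
        rw [hX, hY, hY', mul_one, mul_one]
      · have hY' : (min (D + 1) D' - max (C + 1) C').toNat = 0 := by omega
        have hY : (min ((c:ℤ) * D + 1) ((c:ℤ) * D')
            - max ((c:ℤ) * C + 1) ((c:ℤ) * C')).toNat = 0 := by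
          apply Int.toNat_of_nonpos
          have h1 : (c:ℤ) * (D + 1) ≤ (c:ℤ) * C' :=
            mul_le_mul_of_nonneg_left (by omega) (by positivity)
          have h2 : min ((c:ℤ) * D + 1) ((c:ℤ) * D') ≤ (c:ℤ) * D + 1 := min_le_left _ _
          have h3 : (c:ℤ) * C' ≤ max ((c:ℤ) * C + 1) ((c:ℤ) * C') := le_max_right _ _
          nlinarith
        rw [hY, hY', mul_zero, mul_zero, mul_zero]
    · have hY' : (min (D + 1) D' - max (C + 1) C').toNat = 0 := by omega
      have hY : (min ((c:ℤ) * D + 1) ((c:ℤ) * D')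
          - max ((c:ℤ) * C + 1) ((c:ℤ) * C')).toNat = 0 := by
        apply Int.toNat_of_nonpos
        have h1 : (c:ℤ) * D' ≤ (c:ℤ) * C :=
          mul_le_mul_of_nonneg_left h (by positivity)
        have h2 : min ((c:ℤ) * D + 1) ((c:ℤ) * D') ≤ (c:ℤ) * D' := min_le_right _ _
        have h3 : (c:ℤ) * C + 1 ≤ max ((c:ℤ) * C + 1) ((c:ℤ) * C') := le_max_left _ _
        nlinarith
      rw [hY, hY', mul_zero, mul_zero, mul_zero]

/-- Variant of `key` with the two factors in the other order. -/
lemma key' (A B A' B' C D C' D' : ℤ) (c : ℕ) (hc : 1 ≤ c)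
    (hCD : C + 1 ≤ D) (hCD' : C' + 1 ≤ D')
    (hd : min B B' ≤ max A A' ∨ min D D' ≤ max C C') :
    (min ((c:ℤ) * D + 1) ((c:ℤ) * D') - max ((c:ℤ) * C + 1) ((c:ℤ) * C')).toNat *
      (min ((c:ℤ) * B) ((c:ℤ) * B') - max ((c:ℤ) * A) ((c:ℤ) * A')).toNat
    = c * ((min (D + 1) D' - max (C + 1) C').toNat * (min B B' - max A A').toNat) := by
  rw [mul_comm, key A B A' B' C D C' D' c hc hCD hCD' hd,
    mul_comm ((min B B' - max A A').toNat)]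

lemma flipShift (x y z w : ℤ) :
    (min (x + -1) y - max (z + -1) w).toNat = (min (y + 1) x - max (w + 1) z).toNat := by
  omega

/-- Scaling two disjoint rectangles by `c` multiplies the length of the interface
between them (in any direction `u ∈ U2`) by `c`. -/
theorem interface_scaling (a b a' b' : ℤ) (m n m' n' : ℕ)
    (hm : 1 ≤ m) (hn : 1 ≤ n) (hm' : 1 ≤ m') (hn' : 1 ≤ n')
    (hdisj : rect a b m n ∩ rect a' b' m' n' = ∅)
    (c : ℕ) (hc : 1 ≤ c) (u : ℤ × ℤ) (hu : u ∈ U2) :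
    (interface u (scaling (rect a b m n) c) (scaling (rect a' b' m' n') c)).ncard =
      c * (interface u (rect a b m n) (rect a' b' m' n')).ncard := by
  have hd : (a' + (m':ℤ) ≤ a) ∨ (a + (m:ℤ) ≤ a') ∨ (b' + (n':ℤ) ≤ b) ∨ (b + (n:ℤ) ≤ b') := by
    by_contra h
    push_neg at h
    have hmem : (max a a', max b b') ∈ rect a b m n ∩ rect a' b' m' n' := by
      constructor <;> simp only [rect, Set.mem_setOf_eq] <;> omega
    rw [hdisj] at hmem
    exact hmem
  rw [scaling_rect a b m n c hc, scaling_rect a' b' m' n' c hc,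
    interface_rect_ncard, interface_rect_ncard]
  simp only [U2, Set.mem_insert_iff, Set.mem_singleton_iff] at hu
  rcases hu with rfl | rfl | rfl | rfl
  all_goals push_cast
  · -- u = (0, 1)
    simp only [← mul_add, add_zero]
    exact key a (a + (m:ℤ)) a' (a' + (m':ℤ)) b (b + (n:ℤ)) b' (b' + (n':ℤ)) c hc
      (by omega) (by omega) (by omega)
  · -- u = (1, 0)
    simp only [← mul_add, add_zero]
    exact key' b (b + (n:ℤ)) b' (b' + (n':ℤ)) a (a + (m:ℤ)) a' (a' + (m':ℤ)) c hc
      (by omega) (by omega) (by omega)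
  · -- u = (0, -1)
    rw [flipShift, flipShift]
    simp only [← mul_add, add_zero]
    exact key a (a + (m:ℤ)) a' (a' + (m':ℤ)) b' (b' + (n':ℤ)) b (b + (n:ℤ)) c hc
      (by omega) (by omega) (by omega)
  · -- u = (-1, 0)
    rw [flipShift, flipShift]
    simp only [← mul_add, add_zero]
    exact key' b (b + (n:ℤ)) b' (b' + (n':ℤ)) a' (a' + (m':ℤ)) a (a + (m:ℤ)) c hc
      (by omega) (by omega) (by omega)
end
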